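/- arXiv:2412.19558 — 3 statements merged into one kernel-verified Lean document; each statement's English description precedes it below -/
import Mathlib

section
/- Let 𝔉=(X,R) and 𝔉'=(X',R') be frames, x∈X, x'∈X', k ≥ 1, and suppose f is a k-t-morphism from (𝔉,x) to (𝔉',x'). Then for every formula φ of modal degree at most k, if φ is valid at x in 𝔉 (true at x under every valuation), then φ is valid at x' in 𝔉'. -/
/-! ## Syntax of tense logic -/

inductive TForm : Type
  | var : ℕ → TForm
  | bot : TForm
  | imp : TForm → TForm → TForm
  | box : TForm → TForm
  | bdia : TForm → TForm
  deriving DecidableEq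

namespace TForm

def neg (φ : TForm) : TForm := imp φ bot

def top : TForm := neg bot

def orf (φ ψ : TForm) : TForm := imp (neg φ) ψ

def andf (φ ψ : TForm) : TForm := neg (imp φ (neg ψ))

def dia (φ : TForm) : TForm := neg (box (neg φ))

def bbox (φ : TForm) : TForm := neg (bdia (neg φ))

def subst (s : ℕ → TForm) : TForm → TForm
  | var n => s n
  | bot => bot
  | imp φ ψ => imp (subst s φ) (subst s ψ)
  | box φ => box (subst s φ)
  | bdia φ => bdia (subst s φ)

/-- Modal degree of a formula. -/
def mdeg : TForm → ℕ
  | var _ => 0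
  | bot => 0
  | imp φ ψ => max (mdeg φ) (mdeg ψ)
  | box φ => mdeg φ + 1
  | bdia φ => mdeg φ + 1

end TForm

open TForm

/-! ## Frames and relational notions -/

/-- `R[U] = {z : ∃ y ∈ U, R y z}`. -/
def Rimg {X : Type*} (R : X → X → Prop) (U : Set X) : Set X := {z | ∃ y ∈ U, R y z}

/-- `R[x]`, the set of `R`-successors of `x`. -/
def rsucc {X : Type*} (R : X → X → Prop) (x : X) : Set X := {y | R x y}

/-- `R̆[x]`, the set of `R`-predecessors of `x`. -/
def rpred {X : Type*} (R : X → X → Prop) (x : X) : Set X := {y | R y x}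

/-- `R_♯^k[x]`. -/
def rsharp {X : Type*} (R : X → X → Prop) : ℕ → X → Set X
  | 0, x => {x}
  | k+1, x => rsharp R k x ∪ Rimg R (rsharp R k x) ∪ Rimg (flip R) (rsharp R k x)

/-- `R_♯^ω[x]`. -/
def rsharpOmega {X : Type*} (R : X → X → Prop) (x : X) : Set X := ⋃ k : ℕ, rsharp R k x

/-- A frame is rooted if it is generated by a single point under `R` and its converse. -/
def Rooted {X : Type*} (R : X → X → Prop) : Prop := ∃ x : X, ∀ y : X, y ∈ rsharpOmega R x

/-- A frame is image-finite if `R_♯^1[x]` is finite for every `x`. -/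
def ImageFinite {X : Type*} (R : X → X → Prop) : Prop := ∀ x : X, (rsharp R 1 x).Finite

/-! ## Semantics -/

def TSat {X : Type*} (R : X → X → Prop) (V : ℕ → Set X) : TForm → Set X
  | .var n => V n
  | .bot => ∅
  | .imp φ ψ => (TSat R V φ)ᶜ ∪ TSat R V ψ
  | .box φ => {x | ∀ y, R x y → y ∈ TSat R V φ}
  | .bdia φ => {x | ∃ y, R y x ∧ y ∈ TSat R V φ}

/-- `φ` is valid at the point `x` of the frame `(X,R)`. -/
def ValidAt {X : Type*} (R : X → X → Prop) (x : X) (φ : TForm) : Prop :=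
  ∀ V : ℕ → Set X, x ∈ TSat R V φ

/-- `φ` is valid in the frame `(X,R)`. -/
def Valid {X : Type*} (R : X → X → Prop) (φ : TForm) : Prop :=
  ∀ (V : ℕ → Set X) (x : X), x ∈ TSat R V φ

/-- The tense logic of a frame. -/
def FrameLog {X : Type*} (R : X → X → Prop) : Set TForm := {φ | Valid R φ}

/-! ## Tense logics -/

/-- `φ` is a substitution instance of a classical propositional tautology. -/
def IsTautInstance (φ : TForm) : Prop :=
  ∀ v : TForm → Prop, ¬ v .bot → (∀ ψ χ, v (.imp ψ χ) ↔ (v ψ → v χ)) → v φ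

/-- A (normal) tense logic. -/
structure TenseLogic (L : Set TForm) : Prop where
  taut_mem : ∀ φ, IsTautInstance φ → φ ∈ L
  adjoint : ∀ φ ψ : TForm, TForm.imp (.bdia φ) ψ ∈ L ↔ TForm.imp φ (.box ψ) ∈ L
  mp : ∀ φ ψ : TForm, TForm.imp φ ψ ∈ L → φ ∈ L → ψ ∈ L
  subst_mem : ∀ φ ∈ L, ∀ s : ℕ → TForm, TForm.subst s φ ∈ L

def Consistent (L : Set TForm) : Prop := TForm.bot ∉ L

/-- A logic is tabular if it is the logic of some finite (nonempty) frame. -/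
def Tabular (L : Set TForm) : Prop :=
  ∃ (X : Type) (_ : Finite X) (_ : Nonempty X) (R : X → X → Prop), L = FrameLog R

/-- A logic is pretabular if it is not tabular while every proper consistent
tense-logic extension of it is tabular. -/
def Pretabular (L : Set TForm) : Prop :=
  ¬ Tabular L ∧
    ∀ L' : Set TForm, TenseLogic L' → L ⊆ L' → L ≠ L' → Consistent L' → Tabular L'

/-- The set of pretabular tense logics extending `L0`. -/
def PTAB (L0 : Set TForm) : Set (Set TForm) :=
  {L | TenseLogic L ∧ L0 ⊆ L ∧ Pretabular L}

/-! ## Some formulas -/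

def bigConj : List TForm → TForm
  | [] => TForm.top
  | φ :: l => andf φ (bigConj l)

def bigDisj : List TForm → TForm
  | [] => TForm.bot
  | φ :: l => orf φ (bigDisj l)

/-- `Δ^k φ`. -/
def tdelta : ℕ → TForm → TForm
  | 0, φ => φ
  | k+1, φ => orf (tdelta k φ) (orf (dia (tdelta k φ)) (TForm.bdia (tdelta k φ)))

/-- `∇^k φ = ¬Δ^k¬φ`. -/
def tnabla (k : ℕ) (φ : TForm) : TForm := neg (tdelta k (neg φ))

/-- `ψ_i = ¬p_0 ∧ ⋯ ∧ ¬p_{i-1} ∧ p_i`. -/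
def tpsi (i : ℕ) : TForm :=
  bigConj (((List.range i).map fun j => neg (var j)) ++ [var i])

/-- `tab^T_n = ¬(Δ^n ψ_0 ∧ ⋯ ∧ Δ^n ψ_n)`. -/
def tabT (n : ℕ) : TForm :=
  neg (bigConj ((List.range (n+1)).map fun i => tdelta n (tpsi i)))

/-! ## General frames -/

structure IsGeneralFrame {X : Type*} (R : X → X → Prop) (A : Set (Set X)) : Prop where
  empty_mem : ∅ ∈ A
  inter_mem : ∀ U ∈ A, ∀ V ∈ A, U ∩ V ∈ A
  compl_mem : ∀ U ∈ A, Uᶜ ∈ A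
  fimg_mem : ∀ U ∈ A, Rimg R U ∈ A
  bimg_mem : ∀ U ∈ A, Rimg (flip R) U ∈ A

def Differentiated {X : Type*} (A : Set (Set X)) : Prop :=
  ∀ x y : X, x ≠ y → ∃ U ∈ A, x ∈ U ∧ y ∉ U

def Tight {X : Type*} (R : X → X → Prop) (A : Set (Set X)) : Prop :=
  ∀ x y : X, ¬ R x y →
    ∃ U ∈ A, ∃ V ∈ A, (x ∈ U ∧ x ∉ Rimg (flip R) V) ∧ (y ∈ V ∧ y ∉ Rimg R U)

/-- Validity in a general frame: truth at all points under all valuations into `A`. -/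
def GValid {X : Type*} (R : X → X → Prop) (A : Set (Set X)) (φ : TForm) : Prop :=
  ∀ V : ℕ → Set X, (∀ n, V n ∈ A) → ∀ x, x ∈ TSat R V φ

/-- Validity at a point of a general frame. -/
def GValidAt {X : Type*} (R : X → X → Prop) (A : Set (Set X)) (x : X) (φ : TForm) : Prop :=
  ∀ V : ℕ → Set X, (∀ n, V n ∈ A) → x ∈ TSat R V φ

/-! ## (Local) t-morphisms -/

/-- Domain of a partial function. -/
def pdom {X Y : Type*} (f : X → Option Y) : Set X := {x | (f x).isSome}

/-- Image of a set under a partial function. -/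
def pimg {X Y : Type*} (f : X → Option Y) (S : Set X) : Set Y := {y | ∃ x ∈ S, f x = some y}

/-- Range of a partial function. -/
def pran {X Y : Type*} (f : X → Option Y) : Set Y := {y | ∃ x, f x = some y}

/-- `f` is a `k`-t-morphism from `((X,R),x)` to `((Y,S),y)`. -/
def IsKTMorphism {X Y : Type*} (R : X → X → Prop) (S : Y → Y → Prop)
    (f : X → Option Y) (x : X) (y : Y) (k : ℕ) : Prop :=
  rsharp R k x ⊆ pdom f ∧ f x = some y ∧
    ∀ z ∈ rsharp R (k-1) x, ∀ z' : Y, f z = some z' →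
      pimg f (rsucc R z) = rsucc S z' ∧ pimg f (rpred R z) = rpred S z'

/-- A (total) t-morphism between frames. -/
def IsTMorphism {X Y : Type*} (R : X → X → Prop) (S : Y → Y → Prop) (f : X → Y) : Prop :=
  ∀ x : X, f '' rsucc R x = rsucc S (f x) ∧ f '' rpred R x = rpred S (f x)

/-! ## Generalized Jankov formulas -/

def finPairs (n : ℕ) : List (Fin n × Fin n) :=
  (List.finRange n).flatMap fun i => (List.finRange n).map fun j => (i, j)

open Classical in
/-- The generalized Jankov formula `𝒥^k(𝔊,y)`, relative to an enumeration
`e : Fin n → Y` of `S_♯^k[y]` with `e 0 = y`. -/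
noncomputable def jankov {Y : Type*} (S : Y → Y → Prop) (k n : ℕ) (e : Fin n → Y) : TForm :=
  andf (andf (TForm.var 0) (tnabla k (bigDisj ((List.finRange n).map fun i => TForm.var i.val))))
    (andf
      (bigConj (((finPairs n).filter fun p => decide (p.1 ≠ p.2)).map fun p =>
        tnabla k (TForm.imp (.var p.1.val) (neg (.var p.2.val)))))
      (andf
        (bigConj (((finPairs n).filter fun p => decide (S (e p.1) (e p.2))).map fun p =>
          tnabla (k-1) (andf (TForm.imp (.var p.1.val) (dia (.var p.2.val)))
            (TForm.imp (.var p.2.val) (.bdia (.var p.1.val))))))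
        (bigConj (((finPairs n).filter fun p => decide (¬ S (e p.1) (e p.2))).map fun p =>
          tnabla (k-1) (andf (TForm.imp (.var p.1.val) (neg (dia (.var p.2.val))))
            (TForm.imp (.var p.2.val) (neg (.bdia (.var p.1.val)))))))))

/-! ## Bounded-parameter formulas -/

/-- `bz_n = Δ^{n+1}p → Δ^n p`. -/
def bz (n : ℕ) : TForm := TForm.imp (tdelta (n+1) (var 0)) (tdelta n (var 0))

def offDiag (n : ℕ) : List (Fin n × Fin n) :=
  (finPairs n).filter fun p => decide (p.1 ≠ p.2)

/-- `bw^+_n`. -/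
def bwp (n : ℕ) : TForm :=
  TForm.imp (bigConj ((List.finRange (n+1)).map fun i => dia (var i.val)))
    (bigDisj ((offDiag (n+1)).map fun p =>
      dia (andf (var p.1.val) (orf (var p.2.val) (dia (var p.2.val))))))

/-- `bw^-_n`. -/
def bwm (n : ℕ) : TForm :=
  TForm.imp (bigConj ((List.finRange (n+1)).map fun i => TForm.bdia (var i.val)))
    (bigDisj ((offDiag (n+1)).map fun p =>
      TForm.bdia (andf (var p.1.val) (orf (var p.2.val) (TForm.bdia (var p.2.val))))))

/-- `bd_n` (with `bd_0 := ⊤`, unused). -/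
def bd : ℕ → TForm
  | 0 => TForm.top
  | 1 => TForm.imp (dia (box (var 0))) (var 0)
  | k+2 => TForm.imp (dia (andf (box (var (k+1))) (neg (bd (k+1))))) (var (k+1))

/-- Every strict chain inside `R[x]` has length at most `n` (`dep(x) ≤ n`). -/
def depLe {X : Type*} (R : X → X → Prop) (x : X) (n : ℕ) : Prop :=
  ∀ (m : ℕ) (c : Fin m → X), (∀ i, R x (c i)) →
    (∀ i j : Fin m, i < j → R (c i) (c j) ∧ ¬ R (c j) (c i)) → m ≤ n

/-- Every antichain inside `R[x]` has size at most `n` (`wid^+(x) ≤ n`). -/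
def widPlusLe {X : Type*} (R : X → X → Prop) (x : X) (n : ℕ) : Prop :=
  ∀ (m : ℕ) (c : Fin m → X), Function.Injective c → (∀ i, R x (c i)) →
    (∀ i j : Fin m, i ≠ j → ¬ R (c i) (c j)) → m ≤ n

/-- `wid^-(x) ≤ n`. -/
def widMinusLe {X : Type*} (R : X → X → Prop) (x : X) (n : ℕ) : Prop :=
  widPlusLe (flip R) x n

/-- `zdg(x) ≤ n`. -/
def zdgLe {X : Type*} (R : X → X → Prop) (x : X) (n : ℕ) : Prop :=
  rsharp R n x = rsharpOmega R x

/-! ## Axiomatically presented logics -/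

/-- The least tense logic containing `Γ` (i.e. `K_t ⊕ Γ`). -/
def TLogicGen (Γ : Set TForm) : Set TForm := ⋂₀ {L : Set TForm | TenseLogic L ∧ Γ ⊆ L}

def axT : TForm := TForm.imp (box (var 0)) (var 0)

def ax4 : TForm := TForm.imp (box (var 0)) (box (box (var 0)))

/-- `S4_t`. -/
def S4t : Set TForm := TLogicGen {axT, ax4}

/-- `S4BP^{k,l}_{n,m}` with all parameters finite. -/
def S4BPfin (k l n m : ℕ) : Set TForm := TLogicGen {axT, ax4, bd k, bz l, bwp n, bwm m}

/-- `S4BP^{k,ω}_{n,m}` (no bound on z-degree: `bz_ω = ⊤`). -/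
def S4BPko (k n m : ℕ) : Set TForm := TLogicGen {axT, ax4, bd k, bwp n, bwm m}

/-- `S4.3_t = S4BP^{ω,1}_{1,1}`. -/
def S43t : Set TForm := TLogicGen {axT, ax4, bz 1, bwp 1, bwm 1}

/-- `S4BP^{2,ω}_{2,2}`. -/
def S4BP2w22 : Set TForm := TLogicGen {axT, ax4, bd 2, bwp 2, bwm 2}

/-- `S4BP^{2,ω}_{2,3}`. -/
def S4BP2w23 : Set TForm := TLogicGen {axT, ax4, bd 2, bwp 2, bwm 3}

/-- `S5_t = S4_t ⊕ (◇p → □◇p)`. -/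
def S5t : Set TForm := TLogicGen {axT, ax4, TForm.imp (dia (var 0)) (box (dia (var 0)))}

/-- Kripke completeness: `L` is the logic of the class of Kripke frames validating `L`. -/
def KripkeComplete (L : Set TForm) : Prop :=
  L = {φ | ∀ (X : Type) (R : X → X → Prop), Nonempty X → (∀ ψ ∈ L, Valid R ψ) → Valid R φ}

/-- The finite model property: `L` is the logic of the class of finite frames validating `L`. -/
def HasFMP (L : Set TForm) : Prop :=
  L = {φ | ∀ (X : Type) (R : X → X → Prop), Finite X → Nonempty X →
        (∀ ψ ∈ L, Valid R ψ) → Valid R φ}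

/-! ## Skeletons and pre-skeletons -/

/-- A skeleton: a preorder frame all of whose clusters are singletons. -/
def IsSkeleton {X : Type*} (R : X → X → Prop) : Prop :=
  Reflexive R ∧ Transitive R ∧ ∀ y z : X, R y z → R z y → y = z

/-- Membership in the blown-up cluster `C^x_λ = {x} ∪ N`. -/
def inCl {X N : Type*} (x : X) : X ⊕ N → Prop
  | .inl u => u = x
  | .inr _ => True

/-- The relation of the pre-skeleton `𝔉^x_λ`, where the fresh points are indexed by `N`:
`R ∪ (C^x_λ × R[x]) ∪ (R̆[x] × C^x_λ) ∪ (C^x_λ × C^x_λ)`. -/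
def preRel {X : Type*} (N : Type*) (R : X → X → Prop) (x : X) : X ⊕ N → X ⊕ N → Prop :=
  fun a b =>
    (∃ u v, a = Sum.inl u ∧ b = Sum.inl v ∧ R u v) ∨
    (inCl x a ∧ ∃ v, b = Sum.inl v ∧ R x v) ∨
    (inCl x b ∧ ∃ u, a = Sum.inl u ∧ R u x) ∨
    (inCl x a ∧ inCl x b)

/-- c-irreducibility of the pre-skeleton `𝔉^x_1`: every t-morphic image of `𝔉^x_1` is
isomorphic to `𝔉^x_1` or is a t-morphic image of `𝔉`. -/
def CIrrOne {X : Type} (R : X → X → Prop) (x : X) : Prop :=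
  ∀ (Y : Type) (S : Y → Y → Prop),
    (∃ f : X ⊕ Fin 1 → Y, Function.Surjective f ∧ IsTMorphism (preRel (Fin 1) R x) S f) →
    ((∃ g : X ⊕ Fin 1 → Y, Function.Bijective g ∧ IsTMorphism (preRel (Fin 1) R x) S g) ∨
     (∃ h : X → Y, Function.Surjective h ∧ IsTMorphism R S h))

/-- c-irreducibility of the pre-skeleton `𝔉^x_ω`: every t-morphic image of `𝔉^x_ω` is
isomorphic to `𝔉^x_m` for some `0 < m ≤ ω` or is a t-morphic image of `𝔉`. -/
def CIrrOmega {X : Type} (R : X → X → Prop) (x : X) : Prop :=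
  ∀ (Y : Type) (S : Y → Y → Prop),
    (∃ f : X ⊕ ℕ → Y, Function.Surjective f ∧ IsTMorphism (preRel ℕ R x) S f) →
    ((∃ m : ℕ, 0 < m ∧ ∃ g : X ⊕ Fin m → Y, Function.Bijective g ∧
        IsTMorphism (preRel (Fin m) R x) S g) ∨
     (∃ g : X ⊕ ℕ → Y, Function.Bijective g ∧ IsTMorphism (preRel ℕ R x) S g) ∨
     (∃ h : X → Y, Function.Surjective h ∧ IsTMorphism R S h))

/-! ## Chains, garlands -/

/-- The chain `𝔠_n = ({0,…,n-1}, ≥)`. -/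
def chainR (n : ℕ) : Fin n → Fin n → Prop := fun i j => j ≤ i

/-- `L^↑ = ⋂_{n ≥ 1} Log(𝔠_n)`, the tense logic of all finite chains. -/
def Lup : Set TForm := ⋂ n : ℕ, FrameLog (chainR (n+1))

def Lcirc : Set TForm := FrameLog (preRel ℕ (chainR 1) (0 : Fin 1))

def Lplus : Set TForm := FrameLog (preRel ℕ (chainR 2) (1 : Fin 2))

def Lminus : Set TForm := FrameLog (preRel ℕ (chainR 2) (0 : Fin 2))

def Lpm : Set TForm := FrameLog (preRel ℕ (chainR 3) (1 : Fin 3))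

/-- The frame `𝔊_ℤ`. -/
def Rz : ℤ → ℤ → Prop := fun i j => i = j ∨ (Odd i ∧ (j = i - 1 ∨ j = i + 1))

/-- `Ga = Log(𝔊_ℤ)`. -/
def Ga : Set TForm := FrameLog Rz

/-- The garland `𝔊_n` on `{0,…,n}`. -/
def garR (n : ℕ) : Fin (n+1) → Fin (n+1) → Prop :=
  fun i j => i = j ∨ (Odd (i : ℕ) ∧ ((j : ℕ) + 1 = (i : ℕ) ∨ (j : ℕ) = (i : ℕ) + 1))

/-! ## Generalized Thue–Morse sequences -/

/-- Endpoints `(lo, hi)` of the domain of the stage-`k` approximation `χ^f_k`. -/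
def tmBnd : ℕ → ℤ × ℤ
  | 0 => (0, 2)
  | k+1 =>
      let ab := tmBnd k
      if k % 2 = 0 then (ab.1, ab.2 + (ab.2 - ab.1 + 1) + 1)
      else (ab.1 - (ab.2 - ab.1 + 1) - 1, ab.2)

/-- Value of the stage-`k` approximation `χ^f_k` (junk outside its domain). -/
def tmVal (f : ℕ → Bool) : ℕ → ℤ → Bool
  | 0, j => decide (j = 2)
  | k+1, j =>
      let a := (tmBnd k).1
      let b := (tmBnd k).2
      if k % 2 = 0 then
        if j ≤ b then tmVal f k j
        else if j = b + 1 then f k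
        else ! tmVal f k (j - (b + 2) + a)
      else
        if a ≤ j then tmVal f k j
        else if j = a - 1 then f k
        else ! tmVal f k (j + (b - a + 1) + 1)

/-- The generalized Thue–Morse sequence `χ^f : ℤ → Bool` generated by `f`
(evaluated at a stage whose domain certainly contains the argument). -/
def chi (f : ℕ → Bool) : ℤ → Bool := fun j => tmVal f (2 * j.natAbs + 2) j

/-- `α` is finitely perfect: for every finite subsequence `β = α↾[c,d]` there is `n ∈ ω`
such that `β` embeds into every finite subsequence `ζ = α↾[c',d']` with `|dom ζ| > n`. -/
def FinitelyPerfect (α : ℤ → Bool) : Prop :=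
  ∀ c d : ℤ, ∃ n : ℕ, ∀ c' d' : ℤ, (n : ℤ) < d' - c' + 1 →
    ∃ s : ℤ, c' ≤ c + s ∧ d + s ≤ d' ∧ ∀ j : ℤ, c ≤ j → j ≤ d → α j = α (j + s)

lemma rsharp_succ_mono {X : Type*} (R : X → X → Prop) (m : ℕ) (x : X) :
    rsharp R m x ⊆ rsharp R (m+1) x := fun z hz => Or.inl (Or.inl hz)

lemma rsharp_mono {X : Type*} (R : X → X → Prop) {m n : ℕ} (h : m ≤ n) (x : X) :
    rsharp R m x ⊆ rsharp R n x := by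
  induction n with
  | zero => simpa [Nat.le_zero.mp h] using Set.Subset.rfl
  | succ n ih =>
    rcases Nat.lt_or_ge m (n+1) with h' | h'
    · exact (ih (Nat.lt_succ_iff.mp h')).trans (rsharp_succ_mono R n x)
    · have : m = n + 1 := le_antisymm h h'
      subst this; exact Set.Subset.rfl

lemma rsharp_fwd {X : Type*} {R : X → X → Prop} {m : ℕ} {x z y : X}
    (hz : z ∈ rsharp R m x) (hR : R z y) : y ∈ rsharp R (m+1) x :=
  Or.inl (Or.inr ⟨z, hz, hR⟩)

lemma rsharp_bwd {X : Type*} {R : X → X → Prop} {m : ℕ} {x z y : X}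
    (hz : z ∈ rsharp R m x) (hR : R y z) : y ∈ rsharp R (m+1) x :=
  Or.inr ⟨z, hz, hR⟩

lemma key_lemma {X X' : Type} (R : X → X → Prop) (R' : X' → X' → Prop)
    (x : X) (x' : X') (k : ℕ) (f : X → Option X')
    (hf : IsKTMorphism R R' f x x' k) (V' : ℕ → Set X') :
    ∀ (φ : TForm) (m : ℕ), m + TForm.mdeg φ ≤ k → ∀ z z', z ∈ rsharp R m x → f z = some z' →
      (z ∈ TSat R (fun n => {w | ∃ w', f w = some w' ∧ w' ∈ V' n}) φ ↔ z' ∈ TSat R' V' φ) := by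
  obtain ⟨hdom, hx, hmor⟩ := hf
  intro φ
  induction φ with
  | var n =>
    intro m _ z z' _ hz'
    simp only [TSat, Set.mem_setOf_eq]
    constructor
    · rintro ⟨w', hw', hmem⟩
      rw [hz'] at hw'; injection hw' with h; rwa [h]
    · intro h; exact ⟨z', hz', h⟩
  | bot => intro m _ z z' _ _; simp [TSat]
  | imp φ ψ ihφ ihψ =>
    intro m hm z z' hz hz'
    have h1 : m + TForm.mdeg φ ≤ k := by simp [TForm.mdeg] at hm; omega
    have h2 : m + TForm.mdeg ψ ≤ k := by simp [TForm.mdeg] at hm; omega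
    simp only [TSat, Set.mem_union, Set.mem_compl_iff]
    rw [ihφ m h1 z z' hz hz', ihψ m h2 z z' hz hz']
  | box φ ih =>
    intro m hm z z' hz hz'
    have hm1 : m + 1 ≤ k := by simp [TForm.mdeg] at hm; omega
    have hzk : z ∈ rsharp R (k-1) x := rsharp_mono R (by omega) x hz
    obtain ⟨hsucc, _⟩ := hmor z hzk z' hz'
    simp only [TSat, Set.mem_setOf_eq]
    constructor
    · intro h y' hy'
      have : y' ∈ pimg f (rsucc R z) := by rw [hsucc]; exact hy'
      obtain ⟨y, hy, hfy⟩ := this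
      exact (ih (m+1) (by simp [TForm.mdeg] at hm; omega) y y' (rsharp_fwd hz hy) hfy).mp (h y hy)
    · intro h y hy
      have hyk : y ∈ rsharp R k x := rsharp_mono R hm1 x (rsharp_fwd hz hy)
      have hyd : (f y).isSome := hdom hyk
      obtain ⟨y', hfy⟩ := Option.isSome_iff_exists.mp hyd
      have : y' ∈ rsucc R' z' := by rw [← hsucc]; exact ⟨y, hy, hfy⟩
      exact (ih (m+1) (by simp [TForm.mdeg] at hm; omega) y y' (rsharp_fwd hz hy) hfy).mpr (h y' this)
  | bdia φ ih =>
    intro m hm z z' hz hz'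
    have hm1 : m + 1 ≤ k := by simp [TForm.mdeg] at hm; omega
    have hzk : z ∈ rsharp R (k-1) x := rsharp_mono R (by omega) x hz
    obtain ⟨_, hpred⟩ := hmor z hzk z' hz'
    simp only [TSat, Set.mem_setOf_eq]
    constructor
    · rintro ⟨y, hy, hmem⟩
      have hyk : y ∈ rsharp R k x := rsharp_mono R hm1 x (rsharp_bwd hz hy)
      obtain ⟨y', hfy⟩ := Option.isSome_iff_exists.mp (hdom hyk)
      have : y' ∈ rpred R' z' := by rw [← hpred]; exact ⟨y, hy, hfy⟩
      exact ⟨y', this, (ih (m+1) (by simp [TForm.mdeg] at hm; omega) y y'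
        (rsharp_bwd hz hy) hfy).mp hmem⟩
    · rintro ⟨y', hy', hmem⟩
      have : y' ∈ pimg f (rpred R z) := by rw [hpred]; exact hy'
      obtain ⟨y, hy, hfy⟩ := this
      exact ⟨y, hy, (ih (m+1) (by simp [TForm.mdeg] at hm; omega) y y'
        (rsharp_bwd hz hy) hfy).mpr hmem⟩

/-- a `k`-t-morphism preserves validity-at-a-point of formulas of
modal degree at most `k`. -/
theorem statement2 {X X' : Type} [Nonempty X] [Nonempty X']
    (R : X → X → Prop) (R' : X' → X' → Prop) (x : X) (x' : X')
    (k : ℕ) (hk : 1 ≤ k) (f : X → Option X') (hf : IsKTMorphism R R' f x x' k) :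
    ∀ φ : TForm, TForm.mdeg φ ≤ k → ValidAt R x φ → ValidAt R' x' φ := by
  intro φ hφ hval V'
  have hx : f x = some x' := hf.2.1
  have h := key_lemma R R' x x' k f hf V' φ 0 (by omega) x x' rfl hx
  exact h.mp (hval _)
end

section
/- Let 𝔉=(X,R) and 𝔉'=(X',R') be frames, x∈X, x'∈X', k ≥ 1, and let f be a k-t-morphism from (𝔉,x) to (𝔉',x') that is sufficient, i.e., there is a nonempty set Y ⊆ R_♯^{k-1}[x] with Y ⊆ dom(f) such that f[R_♯^1[y]] ⊆ f[Y] for all y∈Y. Then f is full, i.e., ran(f) ⊇ (R')_♯^ω[x']. -/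
open TForm

lemma Rimg_mono {X : Type*} (R : X → X → Prop) {U V : Set X} (h : U ⊆ V) :
    Rimg R U ⊆ Rimg R V := by
  rintro z ⟨y, hy, hR⟩; exact ⟨y, h hy, hR⟩

lemma rsharp_succ {X : Type*} (R : X → X → Prop) (n : ℕ) (x : X) :
    rsharp R n x ⊆ rsharp R (n+1) x := fun z hz => Or.inl (Or.inl hz)

lemma rsharp_comp {X : Type*} (R : X → X → Prop) {m : ℕ} {x z : X}
    (hz : z ∈ rsharp R m x) (n : ℕ) : rsharp R n z ⊆ rsharp R (m + n) x := by
  induction n with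
  | zero =>
    intro w hw
    have : w = z := hw
    subst this; exact hz
  | succ n ih =>
    intro w hw
    rcases hw with (hw | hw) | hw
    · exact rsharp_succ R (m+n) x (ih hw)
    · exact Or.inl (Or.inr (Rimg_mono R ih hw))
    · exact Or.inr (Rimg_mono (flip R) ih hw)

lemma rsharp_symm {X : Type*} (R : X → X → Prop) {m : ℕ} {x z : X}
    (hz : z ∈ rsharp R m x) : x ∈ rsharp R m z := by
  induction m generalizing z with
  | zero =>
    have : z = x := hz
    subst this; rfl
  | succ m ih =>
    rcases hz with (hz | ⟨w, hw, hR⟩) | ⟨w, hw, hR⟩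
    · exact rsharp_succ R m z (ih hz)
    · -- R w z, w ∈ rsharp m x; so x ∈ rsharp m w, and w ∈ rsharp 1 z
      have hw1 : w ∈ rsharp R 1 z := Or.inr ⟨z, rfl, hR⟩
      have := rsharp_comp R hw1 m (ih hw)
      rwa [Nat.add_comm] at this
    · -- flip R w z i.e. R z w, w ∈ rsharp m x
      have hw1 : w ∈ rsharp R 1 z := Or.inl (Or.inr ⟨z, rfl, hR⟩)
      have := rsharp_comp R hw1 m (ih hw)
      rwa [Nat.add_comm] at this

lemma map_rsharp {X X' : Type*} {R : X → X → Prop} {R' : X' → X' → Prop}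
    {f : X → Option X'} {x : X} {x' : X'} {k : ℕ}
    (hf : IsKTMorphism R R' f x x' k) :
    ∀ m, m ≤ k - 1 → ∀ z ∈ rsharp R m x, ∀ z', f z = some z' → z' ∈ rsharp R' m x' := by
  obtain ⟨hdom, hx, hmor⟩ := hf
  intro m
  induction m with
  | zero =>
    intro _ z hz z' hfz
    have : z = x := hz
    subst this
    have : z' = x' := by rw [hx] at hfz; exact (Option.some_injective _ hfz).symm
    subst this; rfl
  | succ m ih =>
    intro hm z hz z' hfz
    have hm' : m ≤ k - 1 := Nat.le_of_succ_le hm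
    rcases hz with (hz | ⟨w, hw, hR⟩) | ⟨w, hw, hR⟩
    · exact rsharp_succ R' m x' (ih hm' z hz z' hfz)
    · -- R w z, w ∈ rsharp m x
      have hwk : w ∈ rsharp R (k-1) x := rsharp_mono R hm' x hw
      obtain ⟨w', hfw⟩ := Option.isSome_iff_exists.mp
        (hdom (rsharp_mono R (Nat.sub_le k 1) x hwk))
      have hw' : w' ∈ rsharp R' m x' := ih hm' w hw w' hfw
      have himg := (hmor w hwk w' hfw).1
      have : z' ∈ rsucc R' w' := by
        rw [← himg]; exact ⟨z, hR, hfz⟩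
      exact Or.inl (Or.inr ⟨w', hw', this⟩)
    · -- flip R w z, i.e. R z w, w ∈ rsharp m x
      have hwk : w ∈ rsharp R (k-1) x := rsharp_mono R hm' x hw
      obtain ⟨w', hfw⟩ := Option.isSome_iff_exists.mp
        (hdom (rsharp_mono R (Nat.sub_le k 1) x hwk))
      have hw' : w' ∈ rsharp R' m x' := ih hm' w hw w' hfw
      have himg := (hmor w hwk w' hfw).2
      have : z' ∈ rpred R' w' := by
        rw [← himg]; exact ⟨z, hR, hfz⟩
      exact Or.inr ⟨w', hw', this⟩

/-- a sufficient `k`-t-morphism is full. -/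
theorem statement4 {X X' : Type} [Nonempty X] [Nonempty X']
    (R : X → X → Prop) (R' : X' → X' → Prop) (x : X) (x' : X')
    (k : ℕ) (hk : 1 ≤ k) (f : X → Option X') (hf : IsKTMorphism R R' f x x' k)
    (Y : Set X) (hYne : Y.Nonempty) (hYsub : Y ⊆ rsharp R (k-1) x) (hYdom : Y ⊆ pdom f)
    (hsuff : ∀ y ∈ Y, pimg f (rsharp R 1 y) ⊆ pimg f Y) :
    rsharpOmega R' x' ⊆ pran f := by
  obtain ⟨hdom, hx, hmor⟩ := hf
  -- f[Y] is closed under one `rsharp` step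
  have hclosed : ∀ n : ℕ, ∀ u' ∈ pimg f Y, rsharp R' n u' ⊆ pimg f Y := by
    intro n
    induction n with
    | zero =>
      intro u' hu' w hw
      have : w = u' := hw
      subst this; exact hu'
    | succ n ih =>
      intro u' hu' w hw
      rcases hw with (hw | ⟨v', hv', hR⟩) | ⟨v', hv', hR⟩
      · exact ih u' hu' hw
      · -- R' v' w, v' ∈ rsharp n u' ⊆ f[Y]
        obtain ⟨v, hvY, hfv⟩ := ih u' hu' hv'
        have hvk : v ∈ rsharp R (k-1) x := hYsub hvY
        have himg := (hmor v hvk v' hfv).1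
        have : w ∈ pimg f (rsucc R v) := by rw [himg]; exact hR
        obtain ⟨z, hz, hfz⟩ := this
        exact hsuff v hvY ⟨z, Or.inl (Or.inr ⟨v, rfl, hz⟩), hfz⟩
      · -- flip R' v' w i.e. R' w v'
        obtain ⟨v, hvY, hfv⟩ := ih u' hu' hv'
        have hvk : v ∈ rsharp R (k-1) x := hYsub hvY
        have himg := (hmor v hvk v' hfv).2
        have : w ∈ pimg f (rpred R v) := by rw [himg]; exact hR
        obtain ⟨z, hz, hfz⟩ := this
        exact hsuff v hvY ⟨z, Or.inr ⟨v, rfl, hz⟩, hfz⟩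
  -- pick y ∈ Y with image y'
  obtain ⟨y, hyY⟩ := hYne
  obtain ⟨y', hfy⟩ := Option.isSome_iff_exists.mp (hYdom hyY)
  have hy' : y' ∈ rsharp R' (k-1) x' :=
    map_rsharp ⟨hdom, hx, hmor⟩ (k-1) le_rfl y (hYsub hyY) y' hfy
  have hx'y' : x' ∈ rsharp R' (k-1) y' := rsharp_symm R' hy'
  intro w hw
  obtain ⟨_, ⟨n, rfl⟩, hwn⟩ := hw
  have hw2 : w ∈ rsharp R' (k-1+n) y' := rsharp_comp R' hx'y' n hwn
  have : w ∈ pimg f Y := hclosed (k-1+n) y' ⟨y, hyY, hfy⟩ hw2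
  obtain ⟨z, _, hfz⟩ := this
  exact ⟨z, hfz⟩
end

section
/- Let 𝔉=(X,R) be a preorder frame that is a skeleton (every cluster is a singleton) and let x∈X. Then Log(𝔉^x_ω) = ⋂_{n∈ω} Log(𝔉^x_n). -/
open TForm

/-! ## Auxiliary machinery for statement 8 -/

section Statement8Aux

variable {X : Type} {N N' : Type}

lemma inCl_inr (x : X) (i : N) : inCl x (Sum.inr i) := trivial

lemma preRel_inl_iff {R : X → X → Prop} (hrefl : Reflexive R) (x u : X) (b : X ⊕ N) :
    preRel N R x (Sum.inl u) b ↔ (∃ v, b = Sum.inl v ∧ R u v) ∨ (inCl x b ∧ R u x) := by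
  constructor
  · rintro (⟨u', v, hu, rfl, h⟩ | ⟨ha, v, rfl, h⟩ | ⟨hb, u', hu, h⟩ | ⟨ha, hb⟩)
    · obtain rfl := Sum.inl.inj hu
      exact Or.inl ⟨v, rfl, h⟩
    · obtain rfl : u = x := ha
      exact Or.inl ⟨v, rfl, h⟩
    · obtain rfl := Sum.inl.inj hu
      exact Or.inr ⟨hb, h⟩
    · obtain rfl : u = x := ha
      exact Or.inr ⟨hb, hrefl _⟩
  · rintro (⟨v, rfl, h⟩ | ⟨hb, h⟩)
    · exact Or.inl ⟨u, v, rfl, rfl, h⟩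
    · exact Or.inr (Or.inr (Or.inl ⟨hb, u, rfl, h⟩))

lemma preRel_inCl_iff {R : X → X → Prop} (hrefl : Reflexive R) (x : X) {a : X ⊕ N}
    (ha : inCl x a) (b : X ⊕ N) :
    preRel N R x a b ↔ (∃ v, b = Sum.inl v ∧ R x v) ∨ inCl x b := by
  cases a with
  | inl u =>
    obtain rfl : u = x := ha
    rw [preRel_inl_iff hrefl]
    constructor
    · rintro (h | ⟨hb, -⟩)
      · exact Or.inl h
      · exact Or.inr hb
    · rintro (h | hb)
      · exact Or.inl h
      · exact Or.inr ⟨hb, hrefl _⟩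
  | inr i =>
    constructor
    · rintro (⟨u, v, hu, rfl, h⟩ | ⟨-, v, rfl, h⟩ | ⟨hb, u, hu, h⟩ | ⟨-, hb⟩)
      · exact absurd hu (by simp)
      · exact Or.inl ⟨v, rfl, h⟩
      · exact absurd hu (by simp)
      · exact Or.inr hb
    · rintro (⟨v, rfl, h⟩ | hb)
      · exact Or.inr (Or.inl ⟨trivial, v, rfl, h⟩)
      · exact Or.inr (Or.inr (Or.inr ⟨trivial, hb⟩))

lemma preRel_iff_inl {R : X → X → Prop} (hrefl : Reflexive R) (x v : X) (a : X ⊕ N) :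
    preRel N R x a (Sum.inl v) ↔ (∃ u, a = Sum.inl u ∧ R u v) ∨ (inCl x a ∧ R x v) := by
  constructor
  · rintro (⟨u, v', rfl, hv, h⟩ | ⟨ha, v', hv, h⟩ | ⟨hb, u, rfl, h⟩ | ⟨ha, hb⟩)
    · obtain rfl := Sum.inl.inj hv
      exact Or.inl ⟨u, rfl, h⟩
    · obtain rfl := Sum.inl.inj hv
      exact Or.inr ⟨ha, h⟩
    · obtain rfl : v = x := hb
      exact Or.inl ⟨u, rfl, h⟩
    · obtain rfl : v = x := hb
      exact Or.inr ⟨ha, hrefl _⟩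
  · rintro (⟨u, rfl, h⟩ | ⟨ha, h⟩)
    · exact Or.inl ⟨u, v, rfl, rfl, h⟩
    · exact Or.inr (Or.inl ⟨ha, v, rfl, h⟩)

lemma preRel_iff_inCl {R : X → X → Prop} (hrefl : Reflexive R) (x : X) {b : X ⊕ N}
    (hb : inCl x b) (a : X ⊕ N) :
    preRel N R x a b ↔ (∃ u, a = Sum.inl u ∧ R u x) ∨ inCl x a := by
  cases b with
  | inl v =>
    obtain rfl : v = x := hb
    rw [preRel_iff_inl hrefl]
    constructor
    · rintro (h | ⟨ha, -⟩)
      · exact Or.inl h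
      · exact Or.inr ha
    · rintro (h | ha)
      · exact Or.inl h
      · exact Or.inr ⟨ha, hrefl _⟩
  | inr i =>
    constructor
    · rintro (⟨u, v, rfl, hv, h⟩ | ⟨ha, v, hv, h⟩ | ⟨-, u, rfl, h⟩ | ⟨ha, -⟩)
      · exact absurd hv (by simp)
      · exact absurd hv (by simp)
      · exact Or.inl ⟨u, rfl, h⟩
      · exact Or.inr ha
    · rintro (⟨u, rfl, h⟩ | ha)
      · exact Or.inr (Or.inr (Or.inl ⟨trivial, u, rfl, h⟩))
      · exact Or.inr (Or.inr (Or.inr ⟨ha, trivial⟩))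

/-- A map fixing `X` pointwise and mapping the cluster onto the cluster is a t-morphism
between pre-skeletons. -/
lemma tmorph_cluster {R : X → X → Prop} (hrefl : Reflexive R) (x : X)
    (f : X ⊕ N → X ⊕ N')
    (hl : ∀ y, f (Sum.inl y) = Sum.inl y)
    (hcl : ∀ i : N, inCl x (f (Sum.inr i)))
    (hsurj : ∀ b : X ⊕ N', inCl x b → ∃ a : X ⊕ N, inCl x a ∧ f a = b) :
    IsTMorphism (preRel N R x) (preRel N' R x) f := by
  have hfcl : ∀ a : X ⊕ N, inCl x a → inCl x (f a) := by
    rintro (y | i) h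
    · obtain rfl : y = x := h
      rw [hl]; exact rfl
    · exact hcl i
  intro a
  constructor
  · ext b
    simp only [Set.mem_image, rsucc, Set.mem_setOf_eq]
    cases a with
    | inl u =>
      rw [hl]
      rw [preRel_inl_iff hrefl]
      constructor
      · rintro ⟨a', ha', rfl⟩
        rw [preRel_inl_iff hrefl] at ha'
        rcases ha' with ⟨v, rfl, h⟩ | ⟨hA, h⟩
        · exact Or.inl ⟨v, (hl v).symm ▸ rfl, h⟩
        · exact Or.inr ⟨hfcl _ hA, h⟩
      · rintro (⟨v, rfl, h⟩ | ⟨hb, h⟩)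
        · exact ⟨Sum.inl v, by rw [preRel_inl_iff hrefl]; exact Or.inl ⟨v, rfl, h⟩, hl v⟩
        · obtain ⟨a', hA, rfl⟩ := hsurj b hb
          exact ⟨a', by rw [preRel_inl_iff hrefl]; exact Or.inr ⟨hA, h⟩, rfl⟩
    | inr i =>
      rw [preRel_inCl_iff hrefl x (hcl i)]
      constructor
      · rintro ⟨a', ha', rfl⟩
        rw [preRel_inCl_iff hrefl x (inCl_inr x _)] at ha'
        rcases ha' with ⟨v, rfl, h⟩ | hA
        · exact Or.inl ⟨v, hl v, h⟩
        · exact Or.inr (hfcl _ hA)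
      · rintro (⟨v, rfl, h⟩ | hb)
        · exact ⟨Sum.inl v, by rw [preRel_inCl_iff hrefl x (inCl_inr x _)]; exact Or.inl ⟨v, rfl, h⟩, hl v⟩
        · obtain ⟨a', hA, rfl⟩ := hsurj b hb
          exact ⟨a', by rw [preRel_inCl_iff hrefl x (inCl_inr x _)]; exact Or.inr hA, rfl⟩
  · ext b
    simp only [Set.mem_image, rpred, Set.mem_setOf_eq]
    cases a with
    | inl u =>
      rw [hl]
      rw [preRel_iff_inl hrefl]
      constructor
      · rintro ⟨a', ha', rfl⟩
        rw [preRel_iff_inl hrefl] at ha'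
        rcases ha' with ⟨v, rfl, h⟩ | ⟨hA, h⟩
        · exact Or.inl ⟨v, (hl v).symm ▸ rfl, h⟩
        · exact Or.inr ⟨hfcl _ hA, h⟩
      · rintro (⟨v, rfl, h⟩ | ⟨hb, h⟩)
        · exact ⟨Sum.inl v, by rw [preRel_iff_inl hrefl]; exact Or.inl ⟨v, rfl, h⟩, hl v⟩
        · obtain ⟨a', hA, rfl⟩ := hsurj b hb
          exact ⟨a', by rw [preRel_iff_inl hrefl]; exact Or.inr ⟨hA, h⟩, rfl⟩
    | inr i =>
      rw [preRel_iff_inCl hrefl x (hcl i)]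
      constructor
      · rintro ⟨a', ha', rfl⟩
        rw [preRel_iff_inCl hrefl x (inCl_inr x _)] at ha'
        rcases ha' with ⟨v, rfl, h⟩ | hA
        · exact Or.inl ⟨v, hl v, h⟩
        · exact Or.inr (hfcl _ hA)
      · rintro (⟨v, rfl, h⟩ | hb)
        · exact ⟨Sum.inl v, by rw [preRel_iff_inCl hrefl x (inCl_inr x _)]; exact Or.inl ⟨v, rfl, h⟩, hl v⟩
        · obtain ⟨a', hA, rfl⟩ := hsurj b hb
          exact ⟨a', by rw [preRel_iff_inCl hrefl x (inCl_inr x _)]; exact Or.inr hA, rfl⟩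

/-- Truth transfer along a t-morphism, when the source valuation is the pullback of the
target valuation. -/
lemma tsat_tmorph {A B : Type} {R : A → A → Prop} {S : B → B → Prop} {f : A → B}
    (hf : IsTMorphism R S f) {V : ℕ → Set A} {V' : ℕ → Set B}
    (hV : ∀ n, V n = f ⁻¹' V' n) :
    ∀ (φ : TForm) (a : A), a ∈ TSat R V φ ↔ f a ∈ TSat S V' φ := by
  intro φ
  induction φ with
  | var n => intro a; rw [show TSat R V (.var n) = V n from rfl, hV n]; rfl
  | bot => intro a; simp [TSat]
  | imp φ ψ ihφ ihψ =>
    intro a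
    show a ∈ (TSat R V φ)ᶜ ∪ TSat R V ψ ↔ f a ∈ (TSat S V' φ)ᶜ ∪ TSat S V' ψ
    simp only [Set.mem_union, Set.mem_compl_iff, ihφ a, ihψ a]
  | box φ ih =>
    intro a
    show (∀ y, R a y → y ∈ TSat R V φ) ↔ (∀ y, S (f a) y → y ∈ TSat S V' φ)
    constructor
    · intro H y' hS
      have hmem : y' ∈ f '' rsucc R a := by rw [(hf a).1]; exact hS
      obtain ⟨y, hy, rfl⟩ := hmem
      exact (ih y).1 (H y hy)
    · intro H y hR
      have : f y ∈ rsucc S (f a) := by rw [← (hf a).1]; exact ⟨y, hR, rfl⟩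
      exact (ih y).2 (H _ this)
  | bdia φ ih =>
    intro a
    show (∃ y, R y a ∧ y ∈ TSat R V φ) ↔ (∃ y, S y (f a) ∧ y ∈ TSat S V' φ)
    constructor
    · rintro ⟨y, hR, hy⟩
      refine ⟨f y, ?_, (ih y).1 hy⟩
      have : f y ∈ rpred S (f a) := by rw [← (hf a).2]; exact ⟨y, hR, rfl⟩
      exact this
    · rintro ⟨y', hS, hy'⟩
      have hmem : y' ∈ f '' rpred R a := by rw [(hf a).2]; exact hS
      obtain ⟨y, hy, rfl⟩ := hmem
      exact ⟨y, hy, (ih y).2 hy'⟩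

/-- Variables occurring in a formula. -/
def tvars : TForm → Finset ℕ
  | .var n => {n}
  | .bot => ∅
  | .imp φ ψ => tvars φ ∪ tvars ψ
  | .box φ => tvars φ
  | .bdia φ => tvars φ

lemma tsat_congr {A : Type} {R : A → A → Prop} {V W : ℕ → Set A} :
    ∀ φ : TForm, (∀ n ∈ tvars φ, V n = W n) → TSat R V φ = TSat R W φ := by
  intro φ
  induction φ with
  | var n => intro h; exact h n (by simp [tvars])
  | bot => intro _; rfl
  | imp φ ψ ihφ ihψ =>
    intro h
    show (TSat R V φ)ᶜ ∪ TSat R V ψ = (TSat R W φ)ᶜ ∪ TSat R W ψ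
    rw [ihφ (fun n hn => h n (by simp [tvars, hn])),
      ihψ (fun n hn => h n (by simp [tvars, hn]))]
  | box φ ih =>
    intro h
    show {a | ∀ y, R a y → y ∈ TSat R V φ} = {a | ∀ y, R a y → y ∈ TSat R W φ}
    rw [ih (fun n hn => h n hn)]
  | bdia φ ih =>
    intro h
    show {a | ∃ y, R y a ∧ y ∈ TSat R V φ} = {a | ∃ y, R y a ∧ y ∈ TSat R W φ}
    rw [ih (fun n hn => h n hn)]

/-- The collapse of the `ω`-cluster onto the `n`-cluster. -/
def collapseMap (x : X) (n : ℕ) : X ⊕ ℕ → X ⊕ Fin n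
  | .inl y => .inl y
  | .inr i => if h : i < n then .inr ⟨i, h⟩ else .inl x

lemma collapseMap_surj (x : X) (n : ℕ) : Function.Surjective (collapseMap x n) := by
  rintro (y | c)
  · exact ⟨Sum.inl y, rfl⟩
  · exact ⟨Sum.inr c.val, by simp [collapseMap, c.isLt]⟩

end Statement8Aux
/-- for a preorder skeleton `𝔉` and `x ∈ X`,
`Log(𝔉^x_ω) = ⋂_{n∈ω} Log(𝔉^x_n)`. -/
theorem statement8 {X : Type} [Nonempty X] (R : X → X → Prop)
    (hskel : IsSkeleton R) (x : X) :
    FrameLog (preRel ℕ R x) = ⋂ n : ℕ, FrameLog (preRel (Fin n) R x) := by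
  classical
  have hrefl : Reflexive R := hskel.1
  ext φ
  simp only [Set.mem_iInter]
  constructor
  · -- Log(𝔉^x_ω) ⊆ Log(𝔉^x_n)
    intro hφ n
    have hval : Valid (preRel ℕ R x) φ := hφ
    show Valid (preRel (Fin n) R x) φ
    intro V' b
    obtain ⟨a, rfl⟩ := collapseMap_surj x n b
    have hm : IsTMorphism (preRel ℕ R x) (preRel (Fin n) R x) (collapseMap x n) := by
      apply tmorph_cluster hrefl x
      · intro y; rfl
      · intro i
        by_cases hin : i < n
        · have hc : collapseMap x n (Sum.inr i) = Sum.inr ⟨i, hin⟩ := dif_pos hin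
          rw [hc]; exact inCl_inr x _
        · have hc : collapseMap x n (Sum.inr i) = Sum.inl x := dif_neg hin
          rw [hc]; exact rfl
      · rintro (y | c) hb
        · exact ⟨Sum.inl y, hb, rfl⟩
        · exact ⟨Sum.inr c.val, inCl_inr x _, by simp [collapseMap, c.isLt]⟩
    exact (tsat_tmorph hm (fun k => rfl) φ a).1 (hval _ a)
  · -- ⋂ Log(𝔉^x_n) ⊆ Log(𝔉^x_ω)
    intro h
    show Valid (preRel ℕ R x) φ
    intro V a
    -- restrict the valuation to the variables of φ
    set V₀ : ℕ → Set (X ⊕ ℕ) := fun k => if k ∈ tvars φ then V k else ∅ with hV₀def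
    -- patterns of cluster points
    set pat : X ⊕ ℕ → ({v // v ∈ tvars φ} → Bool) :=
      fun a v => decide (a ∈ V₀ v.val) with hpatdef
    set π₀ := pat (Sum.inl x) with hπ₀
    set T : Finset ({v // v ∈ tvars φ} → Bool) :=
      Finset.univ.filter (fun p => p ≠ π₀ ∧ ∃ i : ℕ, pat (Sum.inr i) = p) with hT
    set n := T.card with hn
    set e : {p // p ∈ T} ≃ Fin n := T.equivFin with he
    have hmemT : ∀ i : ℕ, pat (Sum.inr i) ≠ π₀ → pat (Sum.inr i) ∈ T := by
      intro i hi
      exact Finset.mem_filter.mpr ⟨Finset.mem_univ _, hi, i, rfl⟩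
    set f : X ⊕ ℕ → X ⊕ Fin n := fun a =>
      match a with
      | .inl y => .inl y
      | .inr i =>
        if hp : pat (Sum.inr i) = π₀ then .inl x
        else .inr (e ⟨pat (Sum.inr i), hmemT i hp⟩) with hf
    -- the "pattern" of a point of the target, pulled back
    have hpatF : ∀ a : X ⊕ ℕ,
        (fun b : X ⊕ Fin n =>
          match b with
          | .inl y => pat (Sum.inl y)
          | .inr c => (e.symm c : {p // p ∈ T}).val) (f a) = pat a := by
      rintro (y | i)
      · rfl
      · show (fun b : X ⊕ Fin n =>
          match b with
          | .inl y => pat (Sum.inl y)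
          | .inr c => (e.symm c : {p // p ∈ T}).val)
            (if hp : pat (Sum.inr i) = π₀ then Sum.inl x
             else Sum.inr (e ⟨pat (Sum.inr i), hmemT i hp⟩)) = pat (Sum.inr i)
        split
        · next hp => exact hp.symm
        · next hp => show ((e.symm (e ⟨pat (Sum.inr i), hmemT i hp⟩)).val) = _
                     rw [Equiv.symm_apply_apply]
    have hhom : ∀ a a' : X ⊕ ℕ, f a = f a' → ∀ k, (a ∈ V₀ k ↔ a' ∈ V₀ k) := by
      intro a a' hfa k
      have hpp : pat a = pat a' := by
        rw [← hpatF a, ← hpatF a', hfa]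
      by_cases hk : k ∈ tvars φ
      · have := congrFun hpp ⟨k, hk⟩
        simpa [hpatdef, decide_eq_decide] using this
      · simp [hV₀def, hk]
    set V' : ℕ → Set (X ⊕ Fin n) := fun k => {b | ∃ a, f a = b ∧ a ∈ V₀ k} with hV'
    have hVpull : ∀ k, V₀ k = f ⁻¹' V' k := by
      intro k
      ext a
      simp only [Set.mem_preimage, hV', Set.mem_setOf_eq]
      constructor
      · intro ha; exact ⟨a, rfl, ha⟩
      · rintro ⟨a', ha', hmem⟩
        exact (hhom a' a ha' k).1 hmem
    have hm : IsTMorphism (preRel ℕ R x) (preRel (Fin n) R x) f := by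
      apply tmorph_cluster hrefl x
      · intro y; rfl
      · intro i
        show inCl x (if hp : pat (Sum.inr i) = π₀ then Sum.inl x
             else Sum.inr (e ⟨pat (Sum.inr i), hmemT i hp⟩))
        split
        · exact rfl
        · exact trivial
      · rintro (y | c) hb
        · exact ⟨Sum.inl y, hb, rfl⟩
        · obtain ⟨hne, i, hi⟩ := (Finset.mem_filter.mp (e.symm c).property).2
          refine ⟨Sum.inr i, inCl_inr x _, ?_⟩
          show (if hp : pat (Sum.inr i) = π₀ then Sum.inl x
             else Sum.inr (e ⟨pat (Sum.inr i), hmemT i hp⟩)) = Sum.inr c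
          rw [dif_neg (by rw [hi]; exact hne)]
          congr 1
          apply e.symm.injective
          rw [Equiv.symm_apply_apply]
          exact Subtype.ext hi
    have hval : Valid (preRel (Fin n) R x) φ := h n
    have hsat : a ∈ TSat (preRel ℕ R x) V₀ φ :=
      (tsat_tmorph hm hVpull φ a).2 (hval V' (f a))
    have hcongr : TSat (preRel ℕ R x) V₀ φ = TSat (preRel ℕ R x) V φ :=
      tsat_congr φ (fun k hk => by simp [hV₀def, hk])
    rw [hcongr] at hsat
    exact hsat
end
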